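/- arXiv:2508.21279 — 4 statements merged into one kernel-verified Lean document; each statement's English description precedes it below -/
import Mathlib

section
/- Let M_v be a symmetric matrix in R^{Nv×Nv}, M_e in R^{Ne×Ne}, Φ_v in R^{Nv×nv}, Φ_e in R^{Ne×ne}, and 1_E in R^{Ne} with 1_E = Φ_e * 1̂ for some 1̂ in R^{ne}. Suppose the reduced states evolve by one RK2A step: v̂_{k+1} = v̂_k − Δt·M̂_v⁻¹·F̂_v(ŵ_{k+1/2}) and ê_{k+1} = ê_k + Δt·M̂_e⁻¹·F̂_e(ŵ_{k+1/2}, (v̂_k+v̂_{k+1})/2), where M̂_v = Φ_vᵀM_vΦ_v and M̂_e = Φ_eᵀM_eΦ_e are invertible, and suppose the force functions satisfy v̂ᵀF̂_v(ŵ) = 1̂ᵀF̂_e(ŵ, v̂) for all ŵ and all v̂. Then with ṽ = Φ_v v̂ and ẽ = Φ_e ê (zero offsets), the discrete total energy TE = 1_Eᵀ M_e ẽ + (1/2) ṽᵀ M_v ṽ satisfies TE_{k+1} = TE_k. -/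
open Matrix

lemma dotlem {N m : ℕ} (M : Matrix (Fin N) (Fin N) ℝ) (Φ : Matrix (Fin N) (Fin m) ℝ)
    (u w : Fin m → ℝ) :
    (Φ *ᵥ u) ⬝ᵥ (M *ᵥ (Φ *ᵥ w)) = u ⬝ᵥ ((Φᵀ * M * Φ) *ᵥ w) := by
  rw [Matrix.mulVec_mulVec, Matrix.dotProduct_mulVec, ← Matrix.vecMul_transpose,
    Matrix.vecMul_vecMul, ← Matrix.dotProduct_mulVec, Matrix.mul_assoc]

lemma symlem {m : ℕ} (A : Matrix (Fin m) (Fin m) ℝ) (hA : Aᵀ = A) (x y : Fin m → ℝ) :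
    x ⬝ᵥ (A *ᵥ y) = y ⬝ᵥ (A *ᵥ x) := by
  rw [Matrix.dotProduct_mulVec, ← Matrix.mulVec_transpose, hA, dotProduct_comm]

/-- Energy conservation for one RK2A step of the hyperreduced model. -/
theorem rk2a_hyperreduced_energy_conservation
    {Nv Ne nv ne n : ℕ}
    (Mv : Matrix (Fin Nv) (Fin Nv) ℝ) (Me : Matrix (Fin Ne) (Fin Ne) ℝ)
    (Φv : Matrix (Fin Nv) (Fin nv) ℝ) (Φe : Matrix (Fin Ne) (Fin ne) ℝ)
    (oneE : Fin Ne → ℝ) (onehat : Fin ne → ℝ)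
    (hMv : Mv.IsSymm) (hMe : Me.IsSymm)
    (hone : oneE = Φe *ᵥ onehat)
    [Invertible (Φvᵀ * Mv * Φv)] [Invertible (Φeᵀ * Me * Φe)]
    (Fv : (Fin n → ℝ) → Fin nv → ℝ)
    (Fe : (Fin n → ℝ) → (Fin nv → ℝ) → Fin ne → ℝ)
    (hcompat : ∀ (w : Fin n → ℝ) (v : Fin nv → ℝ), v ⬝ᵥ Fv w = onehat ⬝ᵥ Fe w v)
    (Δt : ℝ) (vk vk1 : Fin nv → ℝ) (ek ek1 : Fin ne → ℝ) (whalf : Fin n → ℝ)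
    (hv : vk1 = vk - Δt • ((⅟(Φvᵀ * Mv * Φv)) *ᵥ Fv whalf))
    (he : ek1 = ek + Δt • ((⅟(Φeᵀ * Me * Φe)) *ᵥ Fe whalf ((1/2 : ℝ) • (vk + vk1)))) :
    oneE ⬝ᵥ (Me *ᵥ (Φe *ᵥ ek1)) + (1/2 : ℝ) * ((Φv *ᵥ vk1) ⬝ᵥ (Mv *ᵥ (Φv *ᵥ vk1)))
      = oneE ⬝ᵥ (Me *ᵥ (Φe *ᵥ ek)) + (1/2 : ℝ) * ((Φv *ᵥ vk) ⬝ᵥ (Mv *ᵥ (Φv *ᵥ vk))) := by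
  set A := Φvᵀ * Mv * Φv with hA
  set B := Φeᵀ * Me * Φe with hB
  have hAsym : Aᵀ = A := by
    rw [hA, Matrix.transpose_mul, Matrix.transpose_mul, Matrix.transpose_transpose,
      hMv.eq, Matrix.mul_assoc]
  have hAinv : ∀ x, A *ᵥ (⅟A *ᵥ x) = x := fun x => by
    rw [Matrix.mulVec_mulVec, mul_invOf_self, Matrix.one_mulVec]
  have hBinv : ∀ x, B *ᵥ (⅟B *ᵥ x) = x := fun x => by
    rw [Matrix.mulVec_mulVec, mul_invOf_self, Matrix.one_mulVec]
  subst he hv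
  rw [hone, dotlem, dotlem, dotlem, dotlem]
  simp only [← hA, ← hB]
  have hc := hcompat whalf ((1/2 : ℝ) • (vk + (vk - Δt • ((⅟A) *ᵥ Fv whalf))))
  simp only [Matrix.mulVec_add, Matrix.mulVec_smul, Matrix.mulVec_sub,
    dotProduct_add, dotProduct_sub, dotProduct_smul,
    sub_dotProduct, add_dotProduct, smul_dotProduct,
    smul_eq_mul, hAinv, hBinv] at hc ⊢
  rw [symlem A hAsym (⅟A *ᵥ Fv whalf) vk, hAinv]
  linear_combination (-Δt) * hc
end

section
/- Let L ∈ R^{m×m} be lower triangular with nonzero diagonal, Q ∈ R^{m×J}, C = LQ, b ∈ R^m, b̃ = Q·ρ for a given ρ ∈ R^J, and ε ∈ R^m with ε_j > 0. Define ε̃_s = min_{s ≤ j < m} ε_j / ((j+1)·|L_{js}|) for each s (taking the minimum only over j with L_{js} ≠ 0). If r ∈ R^J satisfies |(Qr)_s − (Qρ)_s| ≤ ε̃_s for all 0 ≤ s < m, then |(Cr)_s − (Cρ)_s| ≤ ε_s for all 0 ≤ s < m. -/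
open Matrix

/-- LQ-preconditioned accuracy thresholds imply the original accuracy constraints. -/
theorem lq_preconditioned_thresholds
    {m J : ℕ}
    (L : Matrix (Fin m) (Fin m) ℝ) (Q C : Matrix (Fin m) (Fin J) ℝ)
    (hC : C = L * Q)
    (hLtri : ∀ i j : Fin m, i < j → L i j = 0)
    (hLdiag : ∀ i : Fin m, L i i ≠ 0)
    (ρ r : Fin J → ℝ) (ε εt : Fin m → ℝ)
    (hε : ∀ j, 0 < ε j)
    (hεt : ∀ s : Fin m, εt s =
      sInf {x : ℝ | ∃ j : Fin m, s ≤ j ∧ L j s ≠ 0 ∧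
        x = ε j / (((j : ℕ) + 1 : ℝ) * |L j s|)})
    (hr : ∀ s : Fin m, |(Q *ᵥ r) s - (Q *ᵥ ρ) s| ≤ εt s) :
    ∀ s : Fin m, |(C *ᵥ r) s - (C *ᵥ ρ) s| ≤ ε s := by
  intro s
  set d : Fin m → ℝ := fun t => (Q *ᵥ r) t - (Q *ᵥ ρ) t with hdd
  have hd : (C *ᵥ r) s - (C *ᵥ ρ) s = ∑ t, L s t * d t := by
    rw [hC, ← Matrix.mulVec_mulVec, ← Matrix.mulVec_mulVec]
    simp only [Matrix.mulVec, dotProduct, hdd, mul_sub, Finset.sum_sub_distrib]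
  have key : ∀ t : Fin m, L s t ≠ 0 →
      t ≤ s ∧ εt t ≤ ε s / (((s : ℕ) + 1 : ℝ) * |L s t|) := by
    intro t ht
    have hts : t ≤ s := by
      by_contra h
      exact ht (hLtri s t (lt_of_not_ge h))
    refine ⟨hts, ?_⟩
    rw [hεt t]
    refine csInf_le ?_ ⟨s, hts, ht, rfl⟩
    refine Set.Finite.bddBelow (Set.Finite.subset
      (Set.finite_range (fun j : Fin m => ε j / (((j : ℕ) + 1 : ℝ) * |L j t|))) ?_)
    rintro x ⟨j, -, -, rfl⟩
    exact ⟨j, rfl⟩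
  have hpos : (0 : ℝ) < ((s : ℕ) + 1 : ℝ) := by positivity
  have hsum : (∑ t : Fin m, if t ≤ s then ε s / ((s : ℕ) + 1 : ℝ) else 0) = ε s := by
    rw [← Finset.sum_filter]
    have hf : Finset.univ.filter (· ≤ s) = Finset.Iic s := by ext t; simp
    rw [hf, Finset.sum_const, Fin.card_Iic, nsmul_eq_mul]
    push_cast
    field_simp
  calc |(C *ᵥ r) s - (C *ᵥ ρ) s| = |∑ t, L s t * d t| := by rw [hd]
    _ ≤ ∑ t, |L s t * d t| := Finset.abs_sum_le_sum_abs _ _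
    _ ≤ ∑ t : Fin m, (if t ≤ s then ε s / ((s : ℕ) + 1 : ℝ) else 0) := by
        refine Finset.sum_le_sum fun t _ => ?_
        by_cases ht : L s t = 0
        · rw [ht, zero_mul, abs_zero]
          split
          · exact div_nonneg (hε s).le hpos.le
          · exact le_refl 0
        · obtain ⟨hts, hle⟩ := key t ht
          rw [if_pos hts]
          have hL : (0 : ℝ) < |L s t| := abs_pos.mpr ht
          calc |L s t * d t| = |L s t| * |d t| := abs_mul _ _
            _ ≤ |L s t| * (ε s / (((s : ℕ) + 1 : ℝ) * |L s t|)) :=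
                mul_le_mul_of_nonneg_left ((hr t).trans hle) (abs_nonneg _)
            _ = ε s / ((s : ℕ) + 1 : ℝ) := by
                field_simp
    _ = ε s := hsum
end

section
/- Let M_v ∈ R^{Nv×Nv} and M_e ∈ R^{Ne×Ne} be symmetric, and suppose the full discrete RK2A step satisfies: v_{k+1} = v_k − Δt·M_v⁻¹F_v(w_{k+1/2}), e_{k+1} = e_k + Δt·M_e⁻¹F_e(w_{k+1/2}, v̄) with v̄ = (v_k + v_{k+1})/2, where the forces satisfy the compatibility identity v'ᵀF_v(w) = 1_Eᵀ F_e(w, v') for all states w and all v' ∈ R^{Nv} (with F_v(w) = F(w)·1_E and F_e(w,v') = F(w)ᵀv' for a matrix-valued F). Then the discrete total energy TE = 1_Eᵀ M_e e + (1/2) vᵀ M_v v satisfies TE_{k+1} = TE_k. -/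
open Matrix

/-- Energy conservation of the full-order RK2A step. -/
theorem rk2a_full_energy_conservation
    {Nv Ne n : ℕ}
    (Mv : Matrix (Fin Nv) (Fin Nv) ℝ) (Me : Matrix (Fin Ne) (Fin Ne) ℝ)
    (hMv : Mv.IsSymm) (hMe : Me.IsSymm)
    [Invertible Mv] [Invertible Me]
    (F : (Fin n → ℝ) → Matrix (Fin Nv) (Fin Ne) ℝ)
    (oneE : Fin Ne → ℝ)
    (Δt : ℝ) (vk vk1 : Fin Nv → ℝ) (ek ek1 : Fin Ne → ℝ) (whalf : Fin n → ℝ)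
    (hv : vk1 = vk - Δt • ((⅟Mv) *ᵥ (F whalf *ᵥ oneE)))
    (he : ek1 = ek + Δt • ((⅟Me) *ᵥ ((F whalf)ᵀ *ᵥ ((1/2 : ℝ) • (vk + vk1))))) :
    oneE ⬝ᵥ (Me *ᵥ ek1) + (1/2 : ℝ) * (vk1 ⬝ᵥ (Mv *ᵥ vk1))
      = oneE ⬝ᵥ (Me *ᵥ ek) + (1/2 : ℝ) * (vk ⬝ᵥ (Mv *ᵥ vk)) := by
  set a : Fin Nv → ℝ := F whalf *ᵥ oneE with ha
  have hMvinv : ∀ x : Fin Nv → ℝ, Mv *ᵥ ((⅟Mv) *ᵥ x) = x := by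
    intro x
    rw [Matrix.mulVec_mulVec, mul_invOf_self, Matrix.one_mulVec]
  have hMeinv : ∀ x : Fin Ne → ℝ, Me *ᵥ ((⅟Me) *ᵥ x) = x := by
    intro x
    rw [Matrix.mulVec_mulVec, mul_invOf_self, Matrix.one_mulVec]
  -- transpose identity
  have htr : ∀ x : Fin Nv → ℝ, oneE ⬝ᵥ ((F whalf)ᵀ *ᵥ x) = x ⬝ᵥ a := by
    intro x
    rw [Matrix.mulVec_transpose, dotProduct_comm, Matrix.dotProduct_mulVec]
  -- symmetry identity
  have hsym : ∀ x y : Fin Nv → ℝ, x ⬝ᵥ (Mv *ᵥ y) = y ⬝ᵥ (Mv *ᵥ x) := by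
    intro x y
    rw [Matrix.dotProduct_mulVec, ← Matrix.mulVec_transpose, hMv.eq, dotProduct_comm]
  have hMvvk1 : Mv *ᵥ vk1 = Mv *ᵥ vk - Δt • a := by
    rw [hv, Matrix.mulVec_sub, Matrix.mulVec_smul, hMvinv]
  have hMeek1 : Me *ᵥ ek1 = Me *ᵥ ek + Δt • ((F whalf)ᵀ *ᵥ ((1/2 : ℝ) • (vk + vk1))) := by
    rw [he, Matrix.mulVec_add, Matrix.mulVec_smul, hMeinv]
  rw [hMeek1, hMvvk1, dotProduct_add, dotProduct_smul, htr,
    dotProduct_sub]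
  have h2 : vk1 ⬝ᵥ (Δt • a) = Δt * (vk1 ⬝ᵥ a) := by
    rw [dotProduct_smul]; rfl
  have hcross : vk1 ⬝ᵥ (Mv *ᵥ vk) = vk ⬝ᵥ (Mv *ᵥ vk1) := hsym _ _
  have hdot : ((1/2 : ℝ) • (vk + vk1)) ⬝ᵥ a = (1/2 : ℝ) * (vk ⬝ᵥ a + vk1 ⬝ᵥ a) := by
    rw [smul_dotProduct, add_dotProduct]; rfl
  rw [hv] at hcross ⊢
  simp only [sub_dotProduct, smul_dotProduct, dotProduct_sub,
    dotProduct_smul, smul_eq_mul, hdot, h2] at *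
  have hva3 : (⅟Mv *ᵥ a) ⬝ᵥ (Mv *ᵥ vk) = vk ⬝ᵥ a := by
    rw [hsym, hMvinv]
  simp only [add_dotProduct, sub_dotProduct, smul_dotProduct,
    smul_eq_mul, hva3]
  ring
end

section
/- Suppose v̂_{k+1} = v̂_k − Δt·f and ê_{k+1} = ê_k + Δt·g, where f ∈ R^{nv}, g ∈ R^{ne} satisfy 1̂ᵀ g = v̄ᵀ f with v̄ = (v̂_k + v̂_{k+1})/2. Then the quantity E(v̂, ê) = 1̂ᵀ ê + (1/2)‖v̂‖² satisfies E(v̂_{k+1}, ê_{k+1}) = E(v̂_k, ê_k). -/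
open Matrix

/-- Abstract one-step energy conservation with identity reduced mass matrices. -/
theorem abstract_one_step_energy_conservation
    {nv ne : ℕ}
    (Δt : ℝ) (f : Fin nv → ℝ) (g : Fin ne → ℝ)
    (onehat : Fin ne → ℝ)
    (vk vk1 : Fin nv → ℝ) (ek ek1 : Fin ne → ℝ)
    (hv : vk1 = vk - Δt • f)
    (he : ek1 = ek + Δt • g)
    (hbal : onehat ⬝ᵥ g = ((1/2 : ℝ) • (vk + vk1)) ⬝ᵥ f) :
    onehat ⬝ᵥ ek1 + (1/2 : ℝ) * (vk1 ⬝ᵥ vk1)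
      = onehat ⬝ᵥ ek + (1/2 : ℝ) * (vk ⬝ᵥ vk) := by
  subst hv he
  simp only [dotProduct_add, add_dotProduct, sub_dotProduct, dotProduct_sub,
    smul_dotProduct, dotProduct_smul, smul_eq_mul, dotProduct_comm vk f] at *
  linear_combination Δt * hbal
end
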